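/- arXiv:0712.0798 — 2 statements merged into one kernel-verified Lean document; each statement's English description precedes it below -/
import Mathlib

section
/- Let (X, X₊) be an ordered Banach space with normal order cone X₊, and let T : [x₋, x₊] ⊂ X → X be a monotone increasing compact map satisfying x₋ ≤ T(x₋) and T(x₊) ≤ x₊. Then the iterates x_{n+1} = T(x_n) with x_0 = x₋, and x̂_{n+1} = T(x̂_n) with x̂_0 = x₊, converge to fixed points x and x̂ of T in [x₋, x₊], and x₋ ≤ x_n ≤ x ≤ x̂ ≤ x̂_n ≤ x₊ for all n. -/
open Filter Topology

lemma mono_seq_conv {X : Type*} [NormedAddCommGroup X]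
    (C : Set X) (hCcl : IsClosed C)
    (α : ℝ) (hα : 0 < α) (hnorm : ∀ u v : X, v ∈ C → u - v ∈ C → ‖v‖ ≤ α * ‖u‖)
    (u : ℕ → X) (hmono : ∀ n m : ℕ, n ≤ m → u m - u n ∈ C)
    (x : X) (φ : ℕ → ℕ) (hφ : StrictMono φ)
    (hconv : Filter.Tendsto (u ∘ φ) Filter.atTop (nhds x)) :
    Filter.Tendsto u Filter.atTop (nhds x) ∧ ∀ n, x - u n ∈ C := by
  have hub : ∀ n, x - u n ∈ C := by
    intro n
    have h1 : Filter.Tendsto (fun k => u (φ k) - u n) Filter.atTop (nhds (x - u n)) :=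
      hconv.sub tendsto_const_nhds
    refine hCcl.mem_of_tendsto h1 ?_
    filter_upwards [Filter.eventually_ge_atTop n] with k hk
    exact hmono n (φ k) (hk.trans (hφ.le_apply))
  refine ⟨?_, hub⟩
  rw [Metric.tendsto_atTop]
  intro ε hε
  rw [Metric.tendsto_atTop] at hconv
  obtain ⟨K, hK⟩ := hconv (ε / α) (by positivity)
  refine ⟨φ K, fun n hn => ?_⟩
  have h1 : ‖x - u n‖ ≤ α * ‖x - u (φ K)‖ := by
    apply hnorm _ _ (hub n)
    have : (x - u (φ K)) - (x - u n) = u n - u (φ K) := by abel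
    rw [this]
    exact hmono _ _ hn
  have h2 : ‖x - u (φ K)‖ < ε / α := by
    have := hK K le_rfl
    simpa [Function.comp, dist_eq_norm, norm_sub_rev] using this
  calc dist (u n) x = ‖x - u n‖ := by rw [dist_eq_norm, norm_sub_rev]
    _ ≤ α * ‖x - u (φ K)‖ := h1
    _ < α * (ε / α) := by exact mul_lt_mul_of_pos_left h2 hα
    _ = ε := by field_simp

/-- Fixed-point theorem for monotone increasing compact maps on an order
interval of an ordered Banach space with normal order cone: the monotone
iterations started at the sub- and super-solutions xlo and xup converge to
fixed points x and xhat, and xlo ≤ xₙ ≤ x ≤ xhat ≤ xhatₙ ≤ xup for all n. -/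
theorem fixed_point_increasing_operators
    {X : Type*} [NormedAddCommGroup X] [NormedSpace ℝ X] [CompleteSpace X]
    (C : Set X) (hCne : C.Nonempty) (hCcl : IsClosed C) (hC0 : C ≠ {0})
    (hCadd : ∀ a b : ℝ, 0 ≤ a → 0 ≤ b → ∀ x ∈ C, ∀ y ∈ C, a • x + b • y ∈ C)
    (hCpt : ∀ x ∈ C, -x ∈ C → x = 0)
    (hnormal : ∃ a : ℝ, 0 < a ∧ ∀ u v : X, v ∈ C → u - v ∈ C → ‖v‖ ≤ a * ‖u‖)
    (xlo xup : X) (hx : xup - xlo ∈ C)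
    (T : X → X)
    (hTcont : ContinuousOn T {z : X | z - xlo ∈ C ∧ xup - z ∈ C})
    (hTcpt : IsCompact (closure (T '' {z : X | z - xlo ∈ C ∧ xup - z ∈ C})))
    (hTmono : ∀ a ∈ {z : X | z - xlo ∈ C ∧ xup - z ∈ C},
              ∀ b ∈ {z : X | z - xlo ∈ C ∧ xup - z ∈ C},
                b - a ∈ C → T b - T a ∈ C)
    (hsub : T xlo - xlo ∈ C) (hsup : xup - T xup ∈ C) :
    ∃ x xhat : X,
      (x - xlo ∈ C ∧ xup - x ∈ C) ∧ (xhat - xlo ∈ C ∧ xup - xhat ∈ C) ∧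
      Filter.Tendsto (fun n => T^[n] xlo) Filter.atTop (nhds x) ∧
      Filter.Tendsto (fun n => T^[n] xup) Filter.atTop (nhds xhat) ∧
      T x = x ∧ T xhat = xhat ∧
      (∀ n : ℕ,
        T^[n] xlo - xlo ∈ C ∧ x - T^[n] xlo ∈ C ∧ xhat - x ∈ C ∧
        T^[n] xup - xhat ∈ C ∧ xup - T^[n] xup ∈ C) := by
  obtain ⟨α, hα, hnorm⟩ := hnormal
  set I : Set X := {z : X | z - xlo ∈ C ∧ xup - z ∈ C} with hI
  obtain ⟨c₀, hc₀⟩ := hCne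
  have h0 : (0 : X) ∈ C := by
    have := hCadd 0 0 le_rfl le_rfl c₀ hc₀ c₀ hc₀
    simpa using this
  have hadd : ∀ u ∈ C, ∀ v ∈ C, u + v ∈ C := by
    intro u hu v hv
    have := hCadd 1 1 zero_le_one zero_le_one u hu v hv
    simpa using this
  have hxloI : xlo ∈ I := ⟨by simpa using h0, hx⟩
  have hxupI : xup ∈ I := ⟨hx, by simpa using h0⟩
  have hIcl : IsClosed I := by
    have h1 : IsClosed {z : X | z - xlo ∈ C} :=
      hCcl.preimage (continuous_id.sub continuous_const)
    have h2 : IsClosed {z : X | xup - z ∈ C} :=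
      hCcl.preimage (continuous_const.sub continuous_id)
    exact h1.inter h2
  -- lower sequence
  set a : ℕ → X := fun n => T^[n] xlo with ha
  have ha0 : a 0 = xlo := rfl
  have haS : ∀ n, a (n + 1) = T (a n) := fun n => Function.iterate_succ_apply' T n xlo
  have glo : ∀ n, a n ∈ I ∧ a (n + 1) - a n ∈ C := by
    intro n
    induction n with
    | zero => exact ⟨hxloI, by rw [haS, ha0]; exact hsub⟩
    | succ n ih =>
      obtain ⟨hIn, hdn⟩ := ih
      have hIn1 : a (n + 1) ∈ I := by
        constructor
        · have := hadd _ hdn _ hIn.1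
          simpa [sub_add_sub_cancel] using this
        · have h1 : T xup - T (a n) ∈ C := hTmono (a n) hIn xup hxupI hIn.2
          have := hadd _ hsup _ h1
          rw [haS]
          simpa [sub_add_sub_cancel] using this
      refine ⟨hIn1, ?_⟩
      have h := hTmono (a n) hIn (a (n+1)) hIn1 hdn
      rw [haS n] at h
      rwa [haS (n+1), haS n]
  have hchain : ∀ n m : ℕ, n ≤ m → a m - a n ∈ C := by
    intro n m hnm
    induction m, hnm using Nat.le_induction with
    | base => simpa using h0
    | succ m hm ih =>
      have := hadd _ (glo m).2 _ ih
      simpa [sub_add_sub_cancel] using this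
  -- upper sequence
  set b : ℕ → X := fun n => T^[n] xup with hb
  have hb0 : b 0 = xup := rfl
  have hbS : ∀ n, b (n + 1) = T (b n) := fun n => Function.iterate_succ_apply' T n xup
  have gup : ∀ n, b n ∈ I ∧ b n - b (n + 1) ∈ C := by
    intro n
    induction n with
    | zero => exact ⟨hxupI, by rw [hbS, hb0]; exact hsup⟩
    | succ n ih =>
      obtain ⟨hIn, hdn⟩ := ih
      have hIn1 : b (n + 1) ∈ I := by
        constructor
        · have h1 : T (b n) - T xlo ∈ C := hTmono xlo hxloI (b n) hIn hIn.1
          have := hadd _ h1 _ hsub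
          rw [hbS]
          simpa [sub_add_sub_cancel] using this
        · have := hadd _ hIn.2 _ hdn
          simpa [sub_add_sub_cancel] using this
      refine ⟨hIn1, ?_⟩
      have h := hTmono (b (n+1)) hIn1 (b n) hIn hdn
      rw [hbS n] at h
      rwa [hbS (n+1), hbS n]
  have hbchain : ∀ n m : ℕ, n ≤ m → b n - b m ∈ C := by
    intro n m hnm
    induction m, hnm using Nat.le_induction with
    | base => simpa using h0
    | succ m hm ih =>
      have := hadd _ ih _ (gup m).2
      simpa [sub_add_sub_cancel] using this
  -- a n ≤ b n
  have hab : ∀ n, b n - a n ∈ C := by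
    intro n
    induction n with
    | zero => simpa [ha0, hb0] using hx
    | succ n ih =>
      rw [haS, hbS]
      exact hTmono (a n) (glo n).1 (b n) (gup n).1 ih
  -- convergence of a
  have hmemA : ∀ n, a (n + 1) ∈ closure (T '' I) := by
    intro n
    exact subset_closure ⟨a n, (glo n).1, (haS n).symm⟩
  obtain ⟨x, hxmem, φ, hφ, hφconv⟩ := hTcpt.tendsto_subseq hmemA
  have hψ : StrictMono (fun k => φ k + 1) := fun i j hij => by
    simpa using Nat.add_lt_add_right (hφ hij) 1
  have hAconv := mono_seq_conv C hCcl α hα hnorm a hchain x (fun k => φ k + 1) hψ hφconv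
  obtain ⟨hAtend, hAub⟩ := hAconv
  -- convergence of b via negation
  have hmemB : ∀ n, b (n + 1) ∈ closure (T '' I) := by
    intro n
    exact subset_closure ⟨b n, (gup n).1, (hbS n).symm⟩
  obtain ⟨y, hymem, χ, hχ, hχconv⟩ := hTcpt.tendsto_subseq hmemB
  have hχ' : StrictMono (fun k => χ k + 1) := fun i j hij => by
    simpa using Nat.add_lt_add_right (hχ hij) 1
  have hnegmono : ∀ n m : ℕ, n ≤ m → (-b m) - (-b n) ∈ C := by
    intro n m hnm
    have h : (-b m) - (-b n) = b n - b m := by abel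
    rw [h]; exact hbchain n m hnm
  have hnegconv : Filter.Tendsto ((fun n => -b n) ∘ (fun k => χ k + 1))
      Filter.atTop (nhds (-y)) := by
    exact (hχconv.neg : _)
  have hBconv := mono_seq_conv C hCcl α hα hnorm (fun n => -b n) hnegmono (-y)
      (fun k => χ k + 1) hχ' hnegconv
  obtain ⟨hBtendneg, hBub⟩ := hBconv
  have hBtend : Filter.Tendsto b Filter.atTop (nhds y) := by
    have := hBtendneg.neg
    simpa using this
  have hBlb : ∀ n, b n - y ∈ C := by
    intro n
    have h := hBub n
    have h2 : -y - (-b n) = b n - y := by abel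
    rwa [h2] at h
  -- limits in I
  have hxI : x ∈ I := hIcl.mem_of_tendsto hAtend (Filter.Eventually.of_forall fun n => (glo n).1)
  have hyI : y ∈ I := hIcl.mem_of_tendsto hBtend (Filter.Eventually.of_forall fun n => (gup n).1)
  -- fixed points
  have hTx : T x = x := by
    have h1 : Filter.Tendsto (fun n => T (a n)) Filter.atTop (nhds (T x)) := by
      have hw : Filter.Tendsto a Filter.atTop (nhdsWithin x I) :=
        tendsto_nhdsWithin_of_tendsto_nhds_of_eventually_within a hAtend
          (Filter.Eventually.of_forall fun n => (glo n).1)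
      exact (hTcont x hxI).tendsto.comp hw
    have h2 : Filter.Tendsto (fun n => T (a n)) Filter.atTop (nhds x) := by
      have : (fun n => T (a n)) = fun n => a (n + 1) := by
        funext n; rw [haS]
      rw [this]
      exact hAtend.comp (tendsto_add_atTop_nat 1)
    exact tendsto_nhds_unique h1 h2
  have hTy : T y = y := by
    have h1 : Filter.Tendsto (fun n => T (b n)) Filter.atTop (nhds (T y)) := by
      have hw : Filter.Tendsto b Filter.atTop (nhdsWithin y I) :=
        tendsto_nhdsWithin_of_tendsto_nhds_of_eventually_within b hBtend
          (Filter.Eventually.of_forall fun n => (gup n).1)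
      exact (hTcont y hyI).tendsto.comp hw
    have h2 : Filter.Tendsto (fun n => T (b n)) Filter.atTop (nhds y) := by
      have : (fun n => T (b n)) = fun n => b (n + 1) := by
        funext n; rw [hbS]
      rw [this]
      exact hBtend.comp (tendsto_add_atTop_nat 1)
    exact tendsto_nhds_unique h1 h2
  -- x ≤ y
  have hxy : y - x ∈ C := by
    refine hCcl.mem_of_tendsto (hBtend.sub hAtend) (Filter.Eventually.of_forall hab)
  exact ⟨x, y, ⟨hxI.1, hxI.2⟩, ⟨hyI.1, hyI.2⟩, hAtend, hBtend, hTx, hTy,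
    fun n => ⟨(glo n).1.1, hAub n, hxy, hBlb n, (gup n).1.2⟩⟩
end

section
/- Let (X, X₊) and (Y, Y₊) be ordered Banach spaces with X₊ normal, A : X → Y a linear invertible operator satisfying the maximum principle, and x₋ ≤ x₊ elements of X. Suppose F : [x₋, x₊] → Y is monotone decreasing and compact, and that −[A x₋ + F(x₋)] ∈ Y₊ and A x₊ + F(x₊) ∈ Y₊. Then there exists x ∈ [x₋, x₊] solving A x + F(x) = 0. -/
open Topology Filter


/-- Existence for semi-linear equations with sub/super-solutions: if A is
linear invertible satisfying the maximum principle, the cone X₊ is normal, F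
is monotone decreasing and compact on the interval [xlo, xup], and xlo, xup are
sub- and super-solutions, then Ax + F(x) = 0 has a solution in [xlo, xup]. -/
theorem semilinear_sub_super_existence
    {X Y : Type*}
    [NormedAddCommGroup X] [NormedSpace ℝ X] [CompleteSpace X]
    [NormedAddCommGroup Y] [NormedSpace ℝ Y] [CompleteSpace Y]
    (Cx : Set X) (hCxne : Cx.Nonempty) (hCxcl : IsClosed Cx) (hCx0 : Cx ≠ {0})
    (hCxadd : ∀ a b : ℝ, 0 ≤ a → 0 ≤ b → ∀ x ∈ Cx, ∀ y ∈ Cx, a • x + b • y ∈ Cx)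
    (hCxpt : ∀ x ∈ Cx, -x ∈ Cx → x = 0)
    (hnormal : ∃ a : ℝ, 0 < a ∧ ∀ u v : X, v ∈ Cx → u - v ∈ Cx → ‖v‖ ≤ a * ‖u‖)
    (Cy : Set Y) (hCyne : Cy.Nonempty) (hCycl : IsClosed Cy) (hCy0 : Cy ≠ {0})
    (hCyadd : ∀ a b : ℝ, 0 ≤ a → 0 ≤ b → ∀ x ∈ Cy, ∀ y ∈ Cy, a • x + b • y ∈ Cy)
    (hCypt : ∀ x ∈ Cy, -x ∈ Cy → x = 0)
    (A : X ≃L[ℝ] Y) (hmax : ∀ u : X, A u ∈ Cy → u ∈ Cx)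
    (xlo xup : X) (hx : xup - xlo ∈ Cx)
    (F : X → Y)
    (hFmono : ∀ a ∈ {z : X | z - xlo ∈ Cx ∧ xup - z ∈ Cx},
              ∀ b ∈ {z : X | z - xlo ∈ Cx ∧ xup - z ∈ Cx},
                b - a ∈ Cx → F a - F b ∈ Cy)
    (hFcont : ContinuousOn F {z : X | z - xlo ∈ Cx ∧ xup - z ∈ Cx})
    (hFcpt : IsCompact (closure (F '' {z : X | z - xlo ∈ Cx ∧ xup - z ∈ Cx})))
    (hsub : -(A xlo + F xlo) ∈ Cy) (hsup : A xup + F xup ∈ Cy) :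
    ∃ x : X, x - xlo ∈ Cx ∧ xup - x ∈ Cx ∧ A x + F x = 0 := by
  set S : Set X := {z : X | z - xlo ∈ Cx ∧ xup - z ∈ Cx} with hSdef
  have h0 : (0:X) ∈ Cx := by
    obtain ⟨w, hw⟩ := hCxne
    have := hCxadd 0 0 le_rfl le_rfl w hw w hw
    simpa using this
  have hadd : ∀ u ∈ Cx, ∀ v ∈ Cx, u + v ∈ Cx := by
    intro u hu v hv
    have := hCxadd 1 1 zero_le_one zero_le_one u hu v hv
    simpa using this
  set T : X → X := fun z => A.symm (-(F z)) with hTdef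
  have hAT : ∀ z, A (T z) = -(F z) := fun z => A.apply_symm_apply _
  have hTmono : ∀ a ∈ S, ∀ b ∈ S, b - a ∈ Cx → T b - T a ∈ Cx := by
    intro a ha b hb hab
    apply hmax
    rw [map_sub, hAT, hAT, neg_sub_neg]
    exact hFmono a ha b hb hab
  have hloS : xlo ∈ S := ⟨by simpa using h0, hx⟩
  have hupS : xup ∈ S := ⟨hx, by simpa using h0⟩
  have hTlo : T xlo - xlo ∈ Cx := by
    apply hmax
    rw [map_sub, hAT]
    have : -(F xlo) - A xlo = -(A xlo + F xlo) := by abel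
    rw [this]; exact hsub
  have hTup : xup - T xup ∈ Cx := by
    apply hmax
    rw [map_sub, hAT]
    have : A xup - -(F xup) = A xup + F xup := by abel
    rw [this]; exact hsup
  have hTS : ∀ z ∈ S, T z ∈ S := by
    intro z hz
    constructor
    · have h1 : T z - T xlo ∈ Cx := hTmono xlo hloS z hz hz.1
      have := hadd _ h1 _ hTlo
      simpa using this
    · have h1 : T xup - T z ∈ Cx := hTmono z hz xup hupS hz.2
      have := hadd _ hTup _ h1
      simpa using this
  set seq : ℕ → X := fun n => T^[n] xlo with hseqdef
  have hseq0 : seq 0 = xlo := rfl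
  have hseqsucc : ∀ n, seq (n+1) = T (seq n) := by
    intro n; simp [hseqdef, Function.iterate_succ_apply']
  have hseqS : ∀ n, seq n ∈ S := by
    intro n; induction n with
    | zero => exact hloS
    | succ n ih => rw [hseqsucc]; exact hTS _ ih
  have hstep : ∀ n, seq (n+1) - seq n ∈ Cx := by
    intro n; induction n with
    | zero => rw [hseqsucc, hseq0]; exact hTlo
    | succ n ih =>
      rw [hseqsucc, hseqsucc]
      exact hTmono _ (hseqS n) _ (hTS _ (hseqS n)) (by rw [← hseqsucc]; exact ih)
  have hmono : ∀ n m, n ≤ m → seq m - seq n ∈ Cx := by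
    intro n m hnm
    induction m with
    | zero =>
      have : n = 0 := Nat.le_zero.mp hnm
      subst this; simpa using h0
    | succ m ih =>
      rcases Nat.lt_or_ge n (m+1) with h | h
      · have h' : n ≤ m := Nat.lt_succ_iff.mp h
        have := hadd _ (hstep m) _ (ih h')
        simpa using this
      · have : n = m+1 := le_antisymm hnm h
        subst this; simpa using h0
  set K : Set X := (fun y => A.symm (-y)) '' closure (F '' S) with hKdef
  have hKcpt : IsCompact K :=
    hFcpt.image (A.symm.continuous.comp continuous_neg)
  have hseqK : ∀ n, seq (n+1) ∈ K := by
    intro n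
    rw [hseqsucc]
    exact ⟨F (seq n), subset_closure ⟨seq n, hseqS n, rfl⟩, rfl⟩
  obtain ⟨x, hxK, φ, hφ, hφlim⟩ := hKcpt.tendsto_subseq hseqK
  have hφge : ∀ k, k ≤ φ k := fun k => hφ.le_apply
  have hxub : ∀ n, x - seq n ∈ Cx := by
    intro n
    have hlim : Filter.Tendsto (fun k => seq (φ k + 1) - seq n) Filter.atTop (𝓝 (x - seq n)) :=
      hφlim.sub_const _
    refine hCxcl.mem_of_tendsto hlim ?_
    filter_upwards [Filter.eventually_ge_atTop n] with k hk
    exact hmono n (φ k + 1) (le_trans hk (le_trans (hφge k) (Nat.le_succ _)))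
  obtain ⟨a, ha, hnorm⟩ := hnormal
  have hconv : Filter.Tendsto seq Filter.atTop (𝓝 x) := by
    rw [Metric.tendsto_atTop]
    intro ε hε
    have hεa : 0 < ε / a := div_pos hε ha
    obtain ⟨k, hk⟩ := (Metric.tendsto_atTop.mp hφlim) (ε / a) hεa
    have hdk : dist (seq (φ k + 1)) x < ε / a := hk k le_rfl
    refine ⟨φ k + 1, fun m hm => ?_⟩
    have hv : x - seq m ∈ Cx := hxub m
    have huv : (x - seq (φ k + 1)) - (x - seq m) ∈ Cx := by
      have := hmono (φ k + 1) m hm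
      simpa [sub_sub_sub_cancel_left] using this
    have := hnorm (x - seq (φ k + 1)) (x - seq m) hv huv
    have hd : dist (seq m) x = ‖x - seq m‖ := by
      rw [dist_eq_norm, ← norm_neg]; congr 1; abel
    rw [hd]
    calc ‖x - seq m‖ ≤ a * ‖x - seq (φ k + 1)‖ := this
      _ < a * (ε / a) := by
          apply mul_lt_mul_of_pos_left _ ha
          rw [← dist_eq_norm, dist_comm]; exact hdk
      _ = ε := by field_simp
  have hxS : x ∈ S := by
    constructor
    · have := hxub 0
      rwa [hseq0] at this
    · refine hCxcl.mem_of_tendsto (Filter.Tendsto.const_sub xup hconv) ?_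
      filter_upwards with n
      exact (hseqS n).2
  have hTcont : ContinuousOn T S :=
    (A.symm.continuous.comp continuous_neg).comp_continuousOn hFcont
  have hlim1 : Filter.Tendsto (fun n => seq (n+1)) Filter.atTop (𝓝 x) :=
    hconv.comp (Filter.tendsto_add_atTop_nat 1)
  have hlim2 : Filter.Tendsto (fun n => T (seq n)) Filter.atTop (𝓝 (T x)) := by
    apply (hTcont x hxS).tendsto.comp
    rw [tendsto_nhdsWithin_iff]
    exact ⟨hconv, Filter.Eventually.of_forall hseqS⟩
  have hfix : T x = x := by
    apply tendsto_nhds_unique _ hlim1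
    simpa only [← hseqsucc] using hlim2
  refine ⟨x, hxS.1, hxS.2, ?_⟩
  have : A (T x) = A x := by rw [hfix]
  rw [hAT] at this
  rw [← this]; abel
end
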